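/- The matrix R^{(01)}(ζ) satisfies the parametrized Yang–Baxter equation: R^{(01)}_{12}(z_1−z_2) R^{(01)}_{13}(z_1−z_3) R^{(01)}_{23}(z_2−z_3) = R^{(01)}_{23}(z_2−z_3) R^{(01)}_{13}(z_1−z_3) R^{(01)}_{12}(z_1−z_2) as an identity of endomorphisms of (ℂ²)^{⊗3} with coefficients in ℂ(z_1,z_2,z_3,ℏ). -/
import Mathlib


noncomputable section

/-- Variables `z₁, z₂, z₃, ℏ`. -/
abbrev RVar : Type := Fin 3 ⊕ Unit

/-- The field `ℂ(z₁,z₂,z₃,ℏ)`. -/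
abbrev RField : Type := FractionRing (MvPolynomial RVar ℂ)

def zR (i : Fin 3) : RField :=
  algebraMap (MvPolynomial RVar ℂ) RField (MvPolynomial.X (Sum.inl i))

def hR : RField :=
  algebraMap (MvPolynomial RVar ℂ) RField (MvPolynomial.X (Sum.inr ()))


lemma hsub_ne (i j : Fin 3) : hR - (zR i - zR j) ≠ 0 := by
  have e : hR - (zR i - zR j) =
      algebraMap (MvPolynomial RVar ℂ) RField
        (MvPolynomial.X (Sum.inr ()) - (MvPolynomial.X (Sum.inl i) - MvPolynomial.X (Sum.inl j))) := by
    simp [hR, zR, map_sub]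
  rw [e]
  intro h
  have h2 : (MvPolynomial.X (Sum.inr ()) - (MvPolynomial.X (Sum.inl i) - MvPolynomial.X (Sum.inl j)) : MvPolynomial RVar ℂ) = 0 :=
    (IsFractionRing.injective (MvPolynomial RVar ℂ) RField) (by simpa using h)
  have := congrArg (MvPolynomial.eval (fun v => match v with | Sum.inr _ => (1:ℂ) | Sum.inl _ => 0)) h2
  simp at this

/-- The 4×4 matrix, in the ordered basis `(v₁⊗v₁, v₁⊗v₂, v₂⊗v₁, v₂⊗v₂)` of `ℂ²⊗ℂ²`
(indexed by `Fin 2 × Fin 2`), with `(1,1)`-entry `a`, middle block `[[b,c],[c,b]]`,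
`(4,4)`-entry `d`, and all other entries `0`. -/
def rMatrix {K : Type*} [Field K] (a b c d : K) :
    Matrix (Fin 2 × Fin 2) (Fin 2 × Fin 2) K := fun p q =>
  if p = (0, 0) ∧ q = (0, 0) then a
  else if p = (0, 1) ∧ q = (0, 1) then b
  else if p = (0, 1) ∧ q = (1, 0) then c
  else if p = (1, 0) ∧ q = (0, 1) then c
  else if p = (1, 0) ∧ q = (1, 0) then b
  else if p = (1, 1) ∧ q = (1, 1) then d
  else 0

/-- The matrix `R^{(r)}(ζ)`, where `r = 00,10,01,11` is encoded as
`(false,false),(true,false),(false,true),(true,true)`:  the middle 2×2 block is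
`[[ζ/(ℏ-ζ), ℏ/(ℏ-ζ)],[ℏ/(ℏ-ζ), ζ/(ℏ-ζ)]]`, the `(1,1)` entry is `1` for `r ∈ {00,10}`
and `(ℏ+ζ)/(ℏ-ζ)` for `r ∈ {01,11}`, the `(4,4)` entry is `1` for `r ∈ {00,01}` and
`(ℏ+ζ)/(ℏ-ζ)` for `r ∈ {10,11}`. -/
def Rr (r : Bool × Bool) (ζ : RField) : Matrix (Fin 2 × Fin 2) (Fin 2 × Fin 2) RField :=
  rMatrix (if r.2 then (hR + ζ) / (hR - ζ) else 1) (ζ / (hR - ζ)) (hR / (hR - ζ))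
    (if r.1 then (hR + ζ) / (hR - ζ) else 1)

/-- The operator acting as `R` on the 1st and 2nd tensor factors of `(ℂ²)^{⊗3}`. -/
def op12 {K : Type*} [Field K] (R : Matrix (Fin 2 × Fin 2) (Fin 2 × Fin 2) K) :
    Matrix (Fin 2 × Fin 2 × Fin 2) (Fin 2 × Fin 2 × Fin 2) K := fun p q =>
  R (p.1, p.2.1) (q.1, q.2.1) * (if p.2.2 = q.2.2 then 1 else 0)

/-- The operator acting as `R` on the 1st and 3rd tensor factors of `(ℂ²)^{⊗3}`. -/
def op13 {K : Type*} [Field K] (R : Matrix (Fin 2 × Fin 2) (Fin 2 × Fin 2) K) :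
    Matrix (Fin 2 × Fin 2 × Fin 2) (Fin 2 × Fin 2 × Fin 2) K := fun p q =>
  R (p.1, p.2.2) (q.1, q.2.2) * (if p.2.1 = q.2.1 then 1 else 0)

/-- The operator acting as `R` on the 2nd and 3rd tensor factors of `(ℂ²)^{⊗3}`. -/
def op23 {K : Type*} [Field K] (R : Matrix (Fin 2 × Fin 2) (Fin 2 × Fin 2) K) :
    Matrix (Fin 2 × Fin 2 × Fin 2) (Fin 2 × Fin 2 × Fin 2) K := fun p q =>
  R (p.2.1, p.2.2) (q.2.1, q.2.2) * (if p.1 = q.1 then 1 else 0)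


def ybeM {K : Type*} [Field K] (h ζ : K) :=
  rMatrix ((h + ζ)/(h - ζ)) (ζ/(h - ζ)) (h/(h - ζ)) (1 : K)

set_option maxHeartbeats 0 in
lemma ybe_aux {K : Type*} [Field K] (h x y z : K)
    (h01 : h - (x - y) ≠ 0) (h02 : h - (x - z) ≠ 0) (h12 : h - (y - z) ≠ 0) :
    op12 (ybeM h (x-y)) * op13 (ybeM h (x-z)) * op23 (ybeM h (y-z)) =
    op23 (ybeM h (y-z)) * op13 (ybeM h (x-z)) * op12 (ybeM h (x-y)) := by
  ext ⟨p1, p2, p3⟩ ⟨q1, q2, q3⟩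
  fin_cases p1 <;> fin_cases p2 <;> fin_cases p3 <;> fin_cases q1 <;> fin_cases q2 <;> fin_cases q3 <;>
    simp only [Matrix.mul_apply, op12, op13, op23, ybeM, rMatrix, Fintype.sum_prod_type,
      Fin.sum_univ_two] <;>
    norm_num [Prod.ext_iff, Fin.ext_iff] <;>
    field_simp <;>
    ring

/-- **Statement**: the matrix `R^{(01)}(ζ)` satisfies the parametrized Yang–Baxter
equation `R₁₂(z₁-z₂) R₁₃(z₁-z₃) R₂₃(z₂-z₃) = R₂₃(z₂-z₃) R₁₃(z₁-z₃) R₁₂(z₁-z₂)`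
on `(ℂ²)^{⊗3}` with coefficients in `ℂ(z₁,z₂,z₃,ℏ)`. -/
theorem yangBaxter_R01 :
    op12 (Rr (false, true) (zR 0 - zR 1)) * op13 (Rr (false, true) (zR 0 - zR 2)) *
        op23 (Rr (false, true) (zR 1 - zR 2)) =
      op23 (Rr (false, true) (zR 1 - zR 2)) * op13 (Rr (false, true) (zR 0 - zR 2)) *
        op12 (Rr (false, true) (zR 0 - zR 1)) := by
  have e : ∀ ζ : RField, Rr (false, true) ζ = ybeM hR ζ := fun ζ => rfl
  rw [e, e, e]
  exact ybe_aux hR (zR 0) (zR 1) (zR 2) (hsub_ne 0 1) (hsub_ne 0 2) (hsub_ne 1 2)
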